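/- Let f : ℝ → S¹ be continuous and suppose there exists L ∈ S¹ such that f(x) → L as x → +∞ and f(x) → L as x → −∞. Then f admits a lift f̃ : ℝ → ℝ, and for any such lift the limit lim_{x→+∞} (f̃(x) − f̃(−x)) exists and is an integer; this integer does not depend on the choice of lift. -/

import Mathlib

open Filter

/-- A continuous function `f : ℝ → ℂ` taking values in the unit circle `S¹` is *pre-periodic*
if for every `ε > 0` there is a positive integer `N` such that
`|f (x + k * N) - f x| < ε` for all integers `k` and all real `x`. -/
def PrePeriodic (f : ℝ → ℂ) : Prop :=
  Continuous f ∧ (∀ x : ℝ, ‖f x‖ = 1) ∧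
    ∀ ε : ℝ, 0 < ε → ∃ N : ℕ, 0 < N ∧
      ∀ (k : ℤ) (x : ℝ), ‖f (x + (k : ℝ) * (N : ℝ)) - f x‖ < ε

/-- `F : ℝ → ℝ` is a lift of `f : ℝ → S¹ ⊆ ℂ` if `F` is continuous and
`f x = e^{2 π i F x}` for all `x`. -/
def IsLift (f : ℝ → ℂ) (F : ℝ → ℝ) : Prop :=
  Continuous F ∧ ∀ x : ℝ, f x = Complex.exp (2 * Real.pi * Complex.I * (F x : ℂ))

/-! `t ↦ e^{2πit}` is a covering map `ℝ → S¹`. Since `ℝ` is simply connected, `f` lifts, and two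
lifts agree up to an integer constant because lifts are determined by one value. Over a small
neighbourhood of `L` the covering is trivial; once `f` stays in it, i.e. on a ray `[N, ∞)`, a lift
cannot change sheets, so it converges to a point over `L`. The same holds at `-∞`, and two points
over `L` differ by an integer. -/

open Topology Real

theorem IsCoveringMap.exists_tendsto_atTop_of_tendsto_comp {α E X : Type*}
    [ConditionallyCompleteLinearOrder α] [TopologicalSpace α] [OrderTopology α]
    [DenselyOrdered α] [Nonempty α] [TopologicalSpace E] [TopologicalSpace X]
    {p : E → X} (hp : IsCoveringMap p) {g : α → E} (hg : Continuous g) {x : X}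
    (h : Tendsto (p ∘ g) atTop (𝓝 x)) : ∃ e, p e = x ∧ Tendsto g atTop (𝓝 e) := by
  have hx := hp x
  obtain ⟨-, U, hxU, hU, -, H, -⟩ := hp x
  obtain ⟨M, hM⟩ := eventually_atTop.mp (h (hU.mem_nhds hxU))
  have : Nonempty (p ⁻¹' {x}) := ⟨(H ⟨g M, hM M le_rfl⟩).2⟩
  have := hx.discreteTopology_fiber
  let t := hx.toTrivialization
  have hxt : x ∈ t.baseSet := hx.mem_toTrivialization_baseSet
  obtain ⟨N, hN⟩ := eventually_atTop.mp (h (t.open_baseSet.mem_nhds hxt))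
  have hsource : Set.MapsTo g (Set.Ici N) t.source := fun y hy => t.mem_source.mpr (hN y hy)
  have hcont : ContinuousOn (fun y => t (g y)) (Set.Ici N) :=
    t.continuousOn_toFun.comp hg.continuousOn hsource
  -- on `[N, ∞)` the path `g` stays in a single sheet over the evenly covered neighbourhood of `x`
  have hsheet : ∀ y ∈ Set.Ici N, (t (g y)).2 = (t (g N)).2 := fun y hy =>
    isPreconnected_Ici.constant (f := fun y => (t (g y)).2)
      (continuous_snd.comp_continuousOn hcont) hy Set.self_mem_Ici
  refine ⟨t.toOpenPartialHomeomorph.symm (x, (t (g N)).2), t.proj_symm_apply' hxt, ?_⟩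
  refine ((t.continuousAt_symm_prodMk_left hxt).tendsto.comp h).congr' ?_
  filter_upwards [eventually_ge_atTop N] with y hy
  simp only [Function.comp_apply, ← hsheet y hy, t.symm_apply_mk_proj (hsource hy)]

noncomputable def circleCover (t : ℝ) : Circle := Circle.exp (2 * π * t)

theorem isCoveringMap_circleCover : IsCoveringMap circleCover :=
  Circle.isCoveringMap_exp.comp_homeomorph (Homeomorph.mulLeft₀ (2 * π) (by positivity))

theorem circleCover_surjective : Function.Surjective circleCover := fun z =>
  ⟨(z : ℂ).arg / (2 * π), by rw [circleCover, mul_div_cancel₀ _ (by positivity), Circle.exp_arg]⟩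

theorem circleCover_eq_circleCover_iff {s t : ℝ} :
    circleCover s = circleCover t ↔ ∃ n : ℤ, s = t + n := by
  simp only [circleCover, Circle.exp_eq_exp]
  refine exists_congr fun n => ?_
  constructor <;> intro h
  · nlinarith [pi_pos]
  · rw [h]; ring

theorem circleCover_add_intCast (t : ℝ) (n : ℤ) : circleCover (t + n) = circleCover t :=
  circleCover_eq_circleCover_iff.mpr ⟨n, rfl⟩

theorem coe_circleCover (t : ℝ) :
    (circleCover t : ℂ) = Complex.exp (2 * π * Complex.I * t) := by
  rw [circleCover, Circle.coe_exp]; push_cast; ring_nf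

section IsLift

variable {f : ℝ → ℂ} {F G : ℝ → ℝ}

theorem isLift_iff :
    IsLift f F ↔ Continuous F ∧ ∀ x, (circleCover (F x) : ℂ) = f x := by
  simp only [IsLift, coe_circleCover, eq_comm]

theorem exists_isLift (hc : Continuous f) (hs : ∀ x, ‖f x‖ = 1) :
    ∃ F : ℝ → ℝ, IsLift f F := by
  let g : C(ℝ, Circle) := ⟨fun x => ⟨f x, mem_sphere_zero_iff_norm.mpr (hs x)⟩, hc.subtype_mk _⟩
  obtain ⟨t, ht⟩ := circleCover_surjective (g 0)
  obtain ⟨F, ⟨-, hF⟩, -⟩ := isCoveringMap_circleCover.existsUnique_continuousMap_lifts g 0 t ht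
  exact ⟨F, isLift_iff.mpr ⟨F.continuous, fun x => congr_arg Subtype.val (congr_fun hF x)⟩⟩

theorem IsLift.comp (hF : IsLift f F) {φ : ℝ → ℝ} (hφ : Continuous φ) :
    IsLift (f ∘ φ) (F ∘ φ) :=
  ⟨hF.1.comp hφ, fun x => hF.2 (φ x)⟩

theorem IsLift.exists_eq_add_intCast (hF : IsLift f F) (hG : IsLift f G) :
    ∃ k : ℤ, ∀ x, G x = F x + k := by
  rw [isLift_iff] at hF hG
  have hcomp : circleCover ∘ G = circleCover ∘ F := by
    funext x; exact Circle.ext ((hG.2 x).trans (hF.2 x).symm)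
  obtain ⟨k, hk⟩ := circleCover_eq_circleCover_iff.mp (congr_fun hcomp 0)
  refine ⟨k, congr_fun (isCoveringMap_circleCover.eq_of_comp_eq hG.1 (hF.1.add continuous_const)
    ?_ 0 hk)⟩
  simpa only [Function.comp_def, circleCover_add_intCast] using hcomp

theorem IsLift.exists_tendsto_atTop (hF : IsLift f F) {L : ℂ} (hL : ‖L‖ = 1)
    (h : Tendsto f atTop (𝓝 L)) :
    ∃ c : ℝ, Tendsto F atTop (𝓝 c) ∧ L = Complex.exp (2 * π * Complex.I * c) := by
  rw [isLift_iff] at hF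
  let L' : Circle := ⟨L, mem_sphere_zero_iff_norm.mpr hL⟩
  have hcomp : Tendsto (circleCover ∘ F) atTop (𝓝 L') := by
    refine tendsto_subtype_rng.mpr ?_
    simpa only [Function.comp_def, hF.2] using h
  obtain ⟨c, hc, hFc⟩ := isCoveringMap_circleCover.exists_tendsto_atTop_of_tendsto_comp hF.1 hcomp
  exact ⟨c, hFc, by rw [← coe_circleCover, hc]⟩

end IsLift

/-- If `f : ℝ → S¹` is continuous and has the same limit `L` at `+∞` and `-∞`, then `f`
admits a lift, and for any lift `F` the limit `lim_{x → +∞} (F x - F (-x))` exists and is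
an integer independent of the choice of the lift: the *winding number* of `f`. -/
theorem winding_number_of_common_limits (f : ℝ → ℂ) (L : ℂ)
    (hc : Continuous f) (hs : ∀ x : ℝ, ‖f x‖ = 1) (hL : ‖L‖ = 1)
    (htop : Tendsto f atTop (nhds L)) (hbot : Tendsto f atBot (nhds L)) :
    (∃ F : ℝ → ℝ, IsLift f F) ∧
      ∃ n : ℤ, ∀ F : ℝ → ℝ, IsLift f F →
        Tendsto (fun x : ℝ => F x - F (-x)) atTop (nhds (n : ℝ)) := by
  obtain ⟨F, hF⟩ := exists_isLift hc hs
  obtain ⟨cTop, hFtop, hLtop⟩ := hF.exists_tendsto_atTop hL htop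
  obtain ⟨cBot, hFbot, hLbot⟩ :=
    (hF.comp continuous_neg).exists_tendsto_atTop hL (hbot.comp tendsto_neg_atTop_atBot)
  obtain ⟨n, hn⟩ : ∃ n : ℤ, cTop = cBot + n := by
    rw [← circleCover_eq_circleCover_iff]
    exact Circle.ext (by rw [coe_circleCover, coe_circleCover, ← hLtop, ← hLbot])
  refine ⟨⟨F, hF⟩, n, fun G hG => ?_⟩
  obtain ⟨k, hk⟩ := hF.exists_eq_add_intCast hG
  simp only [hk, add_sub_add_right_eq_sub, show (n : ℝ) = cTop - cBot by linarith]
  exact hFtop.sub hFbot
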